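/- For every c ≥ 0 and every s ≥ 0, the full-bundling utility u_s(x₁,x₂) = max{0, x₁ + x₂ − s} satisfies Rev_c(u_s) ≤ BRev(c); consequently, for every c with 0.077 < c < c̄, no full-bundling mechanism attains the relaxed optimum, since Rev_c(u_s) ≤ BRev(c) < Opt(c) for all s ≥ 0. -/

import Mathlib

/-!
Away from the line `x₁ + x₂ = s` the utility `u_s` is locally constant or of slope `(1, 1)`, so
the revenue integrand is `s` on the buyers' region `{x₁ + x₂ > s}` and `0` elsewhere:
`Rev_c(u_s) = s · area(buyers)`. In the unit square `[c, c+1]²` the buyers' region is the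
complement of a corner triangle of area `(s - 2c)² / 2` when `s ≤ 2c + 1`, and is contained in a
corner triangle of area `(2c + 2 - s)² / 2` otherwise. Both bounds are dominated by the cubic
`s (1 - (s - 2c)² / 2)`, whose maximum over `s` is `BRev(c)`.

`BRev(c) < Opt(c)` is an inequality between expressions in `√2`, `√(c(3c+2))` and
`√(4c² + 6)`; squaring away one radical at a time leaves the polynomial `m(c)² H(c)`, where `m`
vanishes exactly at `c̄` (there `Opt` and `BRev` touch) and `H > 0` on `(0.077, 0.094)`.
-/

open MeasureTheory Real Set

/-- Partial derivative of `u` with respect to the first coordinate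
(defined via `deriv`; for Lipschitz `u` it exists a.e. by Rademacher). -/
noncomputable def pd1 (u : ℝ × ℝ → ℝ) (x : ℝ × ℝ) : ℝ := deriv (fun t => u (t, x.2)) x.1

/-- Partial derivative of `u` with respect to the second coordinate. -/
noncomputable def pd2 (u : ℝ × ℝ → ℝ) (x : ℝ × ℝ) : ℝ := deriv (fun t => u (x.1, t)) x.2

/-- The square `[c, c+1]²`. -/
def box (c : ℝ) : Set (ℝ × ℝ) := Icc c (c + 1) ×ˢ Icc c (c + 1)

/-- The revenue of the (relaxed) mechanism induced by utility `u`: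
`∫_{[c,c+1]²} (x₁ ∂u/∂x₁ + x₂ ∂u/∂x₂ − u)`. -/
noncomputable def Rev (c : ℝ) (u : ℝ × ℝ → ℝ) : ℝ :=
  ∫ x in box c, (x.1 * pd1 u x + x.2 * pd2 u x - u x)

/-- `Opt(c)`, the optimal value of the convexity-relaxed program for `0 ≤ c ≤ c̄`. -/
noncomputable def Opt (c : ℝ) : ℝ :=
  2 / 27 * ((Real.sqrt 2 - 4) * c ^ 3
    + 3 * (Real.sqrt (c * (3 * c + 2)) + Real.sqrt 2 + 1) * c ^ 2
    + (2 * Real.sqrt (c * (3 * c + 2)) + 3 * Real.sqrt 2 + 12) * c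
    + Real.sqrt 2 + 6)

/-- `BRev(c)`, the best full-bundling revenue. -/
noncomputable def BRev (c : ℝ) : ℝ :=
  2 / 27 * (-4 * c ^ 3 + Real.sqrt 2 * Real.sqrt ((2 * c ^ 2 + 3) ^ 3) + 18 * c)

/-- The critical constant `c̄ = √(15 − 8√2) − 2√2 + 1 ≈ 0.0915`. -/
noncomputable def cbar : ℝ := Real.sqrt (15 - 8 * Real.sqrt 2) - 2 * Real.sqrt 2 + 1

open Filter Topology

theorem deriv_max_zero_of_neg {f : ℝ → ℝ} {t : ℝ} (hf : ContinuousAt f t) (ht : f t < 0) :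
    deriv (fun t => max 0 (f t)) t = 0 := by
  have hloc : (fun t => max 0 (f t)) =ᶠ[𝓝 t] fun _ => 0 :=
    (hf.eventually (gt_mem_nhds ht)).mono fun _ h => max_eq_left h.le
  rw [hloc.deriv_eq, deriv_const]

theorem deriv_max_zero_of_pos {f : ℝ → ℝ} {t : ℝ} (hf : ContinuousAt f t) (ht : 0 < f t) :
    deriv (fun t => max 0 (f t)) t = deriv f t := by
  have hloc : (fun t => max 0 (f t)) =ᶠ[𝓝 t] f :=
    (hf.eventually (lt_mem_nhds ht)).mono fun _ h => max_eq_right h.le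
  rw [hloc.deriv_eq]

theorem volume_real_regionBetween_Ioo {f g : ℝ → ℝ} {p q : ℝ} (hpq : p ≤ q)
    (hf : Continuous f) (hg : Continuous g) (hfg : ∀ x ∈ Ioo p q, f x ≤ g x) :
    volume.real (regionBetween f g (Ioo p q)) = ∫ x in p..q, (g x - f x) := by
  rw [measureReal_def, Measure.volume_eq_prod,
    volume_regionBetween_eq_integral (hf.integrableOn_Icc.mono_set Ioo_subset_Icc_self)
      (hg.integrableOn_Icc.mono_set Ioo_subset_Icc_self) measurableSet_Ioo hfg,
    intervalIntegral.integral_of_le hpq, integral_Ioc_eq_integral_Ioo]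
  exact ENNReal.toReal_ofReal
    (setIntegral_nonneg measurableSet_Ioo fun x hx => sub_nonneg.2 (hfg x hx))

theorem volume_setOf_fst_add_snd_eq (s : ℝ) : volume {x : ℝ × ℝ | x.1 + x.2 = s} = 0 := by
  rw [Measure.volume_eq_prod,
    Measure.measure_prod_null (measurableSet_eq_fun (by fun_prop) (by fun_prop))]
  refine Eventually.of_forall fun a => ?_
  have hfiber : Prod.mk a ⁻¹' {x : ℝ × ℝ | x.1 + x.2 = s} = {s - a} := by
    ext y
    simp only [mem_preimage, mem_ofPred_eq, mem_singleton_iff]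
    constructor <;> intro h <;> linarith
  simp [hfiber]

theorem measurableSet_box (c : ℝ) : MeasurableSet (box c) :=
  measurableSet_Icc.prod measurableSet_Icc

theorem volume_box (c : ℝ) : volume (box c) = 1 := by
  rw [box, Measure.volume_eq_prod, Measure.prod_prod, Real.volume_Icc]
  norm_num

theorem volume_real_box (c : ℝ) : volume.real (box c) = 1 := by
  simp [measureReal_def, volume_box]

noncomputable def fullBundling (s : ℝ) (x : ℝ × ℝ) : ℝ := max 0 (x.1 + x.2 - s)

def buyers (c s : ℝ) : Set (ℝ × ℝ) := box c ∩ {x | s < x.1 + x.2}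

theorem revenue_integrand_fullBundling (s : ℝ) {x : ℝ × ℝ} (hx : x.1 + x.2 ≠ s) :
    x.1 * pd1 (fullBundling s) x + x.2 * pd2 (fullBundling s) x - fullBundling s x =
      {y : ℝ × ℝ | s < y.1 + y.2}.indicator (fun _ => s) x := by
  have h1 : ContinuousAt (fun t => t + x.2 - s) x.1 := by fun_prop
  have h2 : ContinuousAt (fun t => x.1 + t - s) x.2 := by fun_prop
  simp only [pd1, pd2, fullBundling]
  rcases hx.lt_or_gt with hlt | hgt
  · rw [deriv_max_zero_of_neg h1 (by linarith), deriv_max_zero_of_neg h2 (by linarith),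
      indicator_of_notMem (by simpa using hlt.le), max_eq_left (by linarith)]
    ring
  · rw [deriv_max_zero_of_pos h1 (by linarith), deriv_max_zero_of_pos h2 (by linarith),
      indicator_of_mem (by exact hgt), max_eq_right (by linarith)]
    simp

theorem rev_fullBundling (c s : ℝ) : Rev c (fullBundling s) = s * volume.real (buyers c s) := by
  have hline := measure_eq_zero_iff_ae_notMem.mp (volume_setOf_fst_add_snd_eq s)
  rw [Rev, setIntegral_congr_ae (measurableSet_box c)
      (hline.mono fun x hx _ => revenue_integrand_fullBundling s hx),
    setIntegral_indicator (measurableSet_lt (by fun_prop) (by fun_prop)), setIntegral_const,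
    smul_eq_mul, mul_comm, buyers]

theorem volume_real_buyers_le_one (c s : ℝ) : volume.real (buyers c s) ≤ 1 :=
  volume_real_box c ▸ measureReal_mono inter_subset_left (by simp [volume_box])

theorem volume_real_buyers_le_one_sub_sq (c : ℝ) {s : ℝ} (h₁ : 2 * c ≤ s) (h₂ : s ≤ 2 * c + 1) :
    volume.real (buyers c s) ≤ 1 - (s - 2 * c) ^ 2 / 2 := by
  set T := regionBetween (fun _ => c) (fun x => s - x) (Ioo c (s - c))
  have hT : T ⊆ box c := fun x ⟨hx₁, hx₂⟩ =>
    ⟨⟨hx₁.1.le, by linarith [hx₁.2]⟩, ⟨hx₂.1.le, by linarith [hx₁.1, hx₂.2]⟩⟩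
  have hbuyers : buyers c s ⊆ box c \ T := fun x ⟨hbox, hx⟩ =>
    ⟨hbox, fun hT => by linarith [hT.2.2, show s < x.1 + x.2 from hx]⟩
  calc volume.real (buyers c s) ≤ volume.real (box c \ T) :=
        measureReal_mono hbuyers (measure_ne_top_of_subset sdiff_subset (by simp [volume_box]))
    _ = volume.real (box c) - volume.real T :=
      measureReal_sdiff hT
        (measurableSet_regionBetween (by fun_prop) (by fun_prop) measurableSet_Ioo)
        (by simp [volume_box])
    _ = 1 - (s - 2 * c) ^ 2 / 2 := by
      rw [volume_real_box, volume_real_regionBetween_Ioo (by linarith) (by fun_prop)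
        (by fun_prop) fun x hx => by linarith [hx.2]]
      simp only [sub_right_comm s _ c]
      rw [intervalIntegral.integral_sub intervalIntegrable_const
        intervalIntegral.intervalIntegrable_id]
      simp
      ring

theorem convex_buyers (c s : ℝ) : Convex ℝ (buyers c s) :=
  ((convex_Icc _ _).prod (convex_Icc _ _)).inter
    (convex_halfSpace_gt (LinearMap.fst ℝ ℝ ℝ + LinearMap.snd ℝ ℝ ℝ).isLinear s)

theorem volume_real_buyers_le_sq (c : ℝ) {s : ℝ} (h₁ : 2 * c + 1 ≤ s) (h₂ : s ≤ 2 * c + 2) :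
    volume.real (buyers c s) ≤ (2 * c + 2 - s) ^ 2 / 2 := by
  set T := regionBetween (fun x => s - x) (fun _ => c + 1) (Ioo (s - c - 1) (c + 1))
  have hT : T ⊆ box c := fun x ⟨hx₁, hx₂⟩ =>
    ⟨⟨by linarith [hx₁.1], hx₁.2.le⟩, ⟨by linarith [hx₁.2, hx₂.1], hx₂.2.le⟩⟩
  have hinterior : interior (buyers c s) ⊆ T := by
    intro x hx
    rw [buyers, interior_inter, box, interior_prod_eq, interior_Icc] at hx
    obtain ⟨⟨hx₁, hx₂⟩, hsum⟩ := hx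
    have hsum : s < x.1 + x.2 := (interior_subset hsum : x ∈ {x : ℝ × ℝ | s < x.1 + x.2})
    exact ⟨⟨by linarith [hx₂.2], hx₁.2⟩, ⟨by linarith, hx₂.2⟩⟩
  calc volume.real (buyers c s) = volume.real (interior (buyers c s)) := by
        simp only [measureReal_def,
          measure_interior_of_null_frontier ((convex_buyers c s).addHaar_frontier volume)]
    _ ≤ volume.real T :=
      measureReal_mono hinterior (measure_ne_top_of_subset hT (by simp [volume_box]))
    _ = (2 * c + 2 - s) ^ 2 / 2 := by
      rw [volume_real_regionBetween_Ioo (by linarith) (by fun_prop) (by fun_prop)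
        fun x hx => by linarith [hx.1]]
      simp only [sub_sub_eq_add_sub, add_sub_right_comm (c + 1) _ s]
      rw [intervalIntegral.integral_add intervalIntegrable_const
        intervalIntegral.intervalIntegrable_id]
      simp
      ring

theorem buyers_eq_empty (c : ℝ) {s : ℝ} (h : 2 * c + 2 ≤ s) : buyers c s = ∅ :=
  eq_empty_of_forall_notMem fun x ⟨⟨⟨_, hx₁⟩, ⟨_, hx₂⟩⟩, hsum⟩ => by
    linarith [show s < x.1 + x.2 from hsum]

theorem BRev_eq (c : ℝ) :
    BRev c = 2 / 27 * (-4 * c ^ 3 + √(4 * c ^ 2 + 6) * (2 * c ^ 2 + 3) + 18 * c) := by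
  have hsqrt : √2 * √((2 * c ^ 2 + 3) ^ 3) = √(4 * c ^ 2 + 6) * (2 * c ^ 2 + 3) := by
    rw [← sqrt_mul zero_le_two, show (2 : ℝ) * (2 * c ^ 2 + 3) ^ 3 =
      (4 * c ^ 2 + 6) * (2 * c ^ 2 + 3) ^ 2 by ring, sqrt_mul (by positivity),
      sqrt_sq (by positivity)]
  rw [BRev, hsqrt]

/-- Selling the bundle at price `s ∈ [2c, 2c + 1]` earns `s (1 - (s - 2c)² / 2)`;
`BRev c` is the maximum of this cubic, attained at `s = (4c + √(4c² + 6)) / 3`. -/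
theorem bundle_revenue_le_BRev {c : ℝ} (hc : 0 ≤ c) (s : ℝ) (hs : 0 ≤ s) :
    s * (1 - (s - 2 * c) ^ 2 / 2) ≤ BRev c := by
  set r := √(4 * c ^ 2 + 6)
  have hr : r ^ 2 = 4 * c ^ 2 + 6 := sq_sqrt (by positivity)
  have hr2c : 2 * c ≤ r := by nlinarith [sqrt_nonneg (4 * c ^ 2 + 6)]
  have hfactor : 54 * (BRev c - s * (1 - (s - 2 * c) ^ 2 / 2)) =
      (3 * s - 4 * c - r) ^ 2 * (3 * s - 4 * c + 2 * r) := by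
    rw [BRev_eq]
    linear_combination (9 * s - 12 * c - 2 * r) * hr
  nlinarith [mul_nonneg (sq_nonneg (3 * s - 4 * c - r)) (by linarith : 0 ≤ 3 * s - 4 * c + 2 * r)]

theorem rev_fullBundling_le_BRev {c : ℝ} (hc : 0 ≤ c) {s : ℝ} (hs : 0 ≤ s) :
    Rev c (fullBundling s) ≤ BRev c := by
  rw [rev_fullBundling]
  rcases le_total s (2 * c) with hlow | hlow
  · have := bundle_revenue_le_BRev hc (2 * c) (by positivity)
    nlinarith [volume_real_buyers_le_one c s]
  rcases le_total s (2 * c + 1) with hmid | hmid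
  · calc s * volume.real (buyers c s) ≤ s * (1 - (s - 2 * c) ^ 2 / 2) :=
          mul_le_mul_of_nonneg_left (volume_real_buyers_le_one_sub_sq c hlow hmid) hs
      _ ≤ BRev c := bundle_revenue_le_BRev hc s hs
  rcases le_total s (2 * c + 2) with hhigh | hhigh
  · have := bundle_revenue_le_BRev hc (2 * c + 1) (by positivity)
    calc s * volume.real (buyers c s) ≤ s * ((2 * c + 2 - s) ^ 2 / 2) :=
          mul_le_mul_of_nonneg_left (volume_real_buyers_le_sq c hmid hhigh) hs
      _ ≤ BRev c := by
        nlinarith [mul_nonneg (mul_nonneg (sub_nonneg.2 hmid) (sub_nonneg.2 hhigh)) hs]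
  · rw [buyers_eq_empty c hhigh, measureReal_empty, mul_zero]
    nlinarith [bundle_revenue_le_BRev hc (2 * c) (by positivity)]

theorem pos_add_of_sq_lt_sq {u v : ℝ} (hv : 0 ≤ v) (h : u ^ 2 < v ^ 2) : 0 < u + v := by
  linarith [abs_lt_of_sq_lt_sq h hv, neg_abs_le u]

/-- `c̄` is the positive root of this quadratic. -/
theorem quadratic_neg_of_lt_cbar {c : ℝ} (hc : 0 ≤ c) (h : c < cbar) :
    c ^ 2 + (4 * √2 - 2) * c + 4 * √2 - 6 < 0 := by
  have ha : √2 ^ 2 = 2 := sq_sqrt zero_le_two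
  have ha₁ : 1.414 < √2 := by nlinarith [sqrt_nonneg 2]
  have hlt : c + 2 * √2 - 1 < √(15 - 8 * √2) := by rw [cbar] at h; linarith
  nlinarith [(lt_sqrt (by linarith)).1 hlt]

/-! Squaring away, in turn, `√(4c² + 6)`, `√(c(3c + 2))` and `√2` in `Opt c - BRev c` and
reducing with `√2² = 2` and `√(c(3c + 2))² = c(3c + 2)` produces the polynomials below. -/

namespace Certificate

noncomputable def U (c : ℝ) : ℝ := -16 - 60*c - 6*c^2 + 12*c^3 + 3*c^4 + 66*c^5 + 13*c^6

noncomputable def V (c : ℝ) : ℝ := 12 + 24*c + 6*c^2 - 6*c^3 + 6*c^4 + 6*c^5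

noncomputable def W (c : ℝ) : ℝ := 24*c + 12*c^2 - 24*c^3 + 18*c^4

noncomputable def Z (c : ℝ) : ℝ := 4*c + 18*c^2 + 30*c^3 + 22*c^4 + 6*c^5

noncomputable def S (c : ℝ) : ℝ :=
  -544 - 3072*c - 5232*c^2 + 592*c^3 + 5268*c^4 + 4728*c^5 + 13396*c^6 + 19656*c^7 + 16515*c^8
    + 9796*c^9 + 2586*c^10 + 12*c^11 + 47*c^12

noncomputable def T (c : ℝ) : ℝ :=
  384 + 2208*c + 3216*c^2 + 912*c^3 + 1392*c^4 + 5208*c^5 + 4572*c^6 + 1764*c^7 + 864*c^8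
    + 840*c^9 + 996*c^10 + 492*c^11

noncomputable def m (c : ℝ) : ℝ := (c ^ 2 - 2 * c - 6) ^ 2 - 32 * (c + 1) ^ 2

noncomputable def H (c : ℝ) : ℝ :=
  -64 + 1792*c + 13504*c^2 + 33344*c^3 + 44032*c^4 + 57536*c^5 + 58392*c^6 + 13896*c^7
    - 26929*c^8 - 76584*c^9 - 133092*c^10 - 149656*c^11 - 145334*c^12 - 102808*c^13
    - 50876*c^14 - 18800*c^15 - 2209*c^16

theorem sq_sub_eq {a b c : ℝ} (ha : a ^ 2 = 2) (hb : b ^ 2 = c * (3 * c + 2)) :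
    (a * (c + 1) ^ 3 + b * (c * (3 * c + 2)) + (3 * c ^ 2 - 6 * c + 6)) ^ 2
      - (4 * c ^ 2 + 6) * (2 * c ^ 2 + 3) ^ 2 = U c + V c * a + (W c + Z c * a) * b := by
  unfold U V W Z
  linear_combination ((c + 1) ^ 3) ^ 2 * ha + (c * (3 * c + 2)) ^ 2 * hb

theorem sq_sub_sq_eq {a b c : ℝ} (ha : a ^ 2 = 2) (hb : b ^ 2 = c * (3 * c + 2)) :
    ((W c + Z c * a) * b) ^ 2 - (U c + V c * a) ^ 2 = S c + T c * a := by
  rw [mul_pow, hb]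
  unfold U V W Z S T
  linear_combination ((c * (3 * c + 2)) * (4*c + 18*c^2 + 30*c^3 + 22*c^4 + 6*c^5) ^ 2
    - (12 + 24*c + 6*c^2 - 6*c^3 + 6*c^4 + 6*c^5) ^ 2) * ha

theorem two_mul_T_sq_sub_S_sq (c : ℝ) : 2 * T c ^ 2 - S c ^ 2 = m c ^ 2 * H c := by
  unfold T S m H
  ring

theorem m_pos_of_lt_cbar {c : ℝ} (hc : 0 ≤ c) (h : c < cbar) : 0 < m c := by
  have hm : m c = (c ^ 2 + (4 * √2 - 2) * c + 4 * √2 - 6) *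
      (c ^ 2 - 2 * c - 6 - 4 * √2 * (c + 1)) := by
    unfold m
    linear_combination (16 * (c + 1) ^ 2) * sq_sqrt (zero_le_two : (0 : ℝ) ≤ 2)
  have hP := quadratic_neg_of_lt_cbar hc h
  rw [hm]
  exact mul_pos_of_neg_of_neg hP (by nlinarith [sqrt_nonneg 2, mul_nonneg (sqrt_nonneg 2) hc])

theorem T_pos {c : ℝ} (hc : 0 ≤ c) : 0 < T c := by
  unfold T
  positivity

theorem Z_nonneg {c : ℝ} (hc : 0 ≤ c) : 0 ≤ Z c := by
  unfold Z
  positivity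

theorem W_pos {c : ℝ} (hc : 0 < c) (hc₁ : c < 1) : 0 < W c := by
  unfold W
  nlinarith [mul_pos hc (mul_pos (sub_pos.2 hc₁) (add_pos hc one_pos)), pow_pos hc 2,
    pow_pos hc 4]

theorem H_pos {c : ℝ} (h₁ : 0.077 < c) (h₂ : c < 0.094) : 0 < H c := by
  have hc : 0 < c := by linarith
  have htail : ∀ n : ℕ, 8 ≤ n → c ^ n ≤ c ^ 8 := fun n hn =>
    pow_le_pow_of_le_one hc.le (by linarith) hn
  have hc8 : c ^ 8 < 1e-8 := by
    calc c ^ 8 < 0.094 ^ 8 := pow_lt_pow_left₀ h₂ hc.le (by norm_num)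
      _ < 1e-8 := by norm_num
  unfold H
  linarith [htail 9 (by norm_num), htail 10 (by norm_num), htail 11 (by norm_num),
    htail 12 (by norm_num), htail 13 (by norm_num), htail 14 (by norm_num),
    htail 15 (by norm_num), htail 16 (by norm_num), pow_pos hc 2, pow_pos hc 3, pow_pos hc 4,
    pow_pos hc 5, pow_pos hc 6, pow_pos hc 7]

end Certificate

open Certificate in
theorem BRev_lt_Opt {c : ℝ} (h₁ : 0.077 < c) (h₂ : c < cbar) : BRev c < Opt c := by
  have hc : 0 < c := by linarith
  have hP := quadratic_neg_of_lt_cbar hc.le h₂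
  set a := √2
  set b := √(c * (3 * c + 2))
  set r := √(4 * c ^ 2 + 6)
  have ha : a ^ 2 = 2 := sq_sqrt zero_le_two
  have hb : b ^ 2 = c * (3 * c + 2) := sq_sqrt (by positivity)
  have hr : r ^ 2 = 4 * c ^ 2 + 6 := sq_sqrt (by positivity)
  have ha₀ : 0 < a := sqrt_pos.2 two_pos
  have hc₁ : c < 0.094 := by nlinarith
  have hST : 0 < S c + T c * a := by
    refine pos_add_of_sq_lt_sq (by have := T_pos hc.le; positivity) ?_
    nlinarith [two_mul_T_sq_sub_S_sq c, pow_pos (m_pos_of_lt_cbar hc.le h₂) 2, H_pos h₁ hc₁]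
  have hUVWZ : 0 < U c + V c * a + (W c + Z c * a) * b := by
    have hWZ : 0 < W c + Z c * a := by
      have := W_pos hc (by linarith)
      have := Z_nonneg hc.le
      positivity
    exact pos_add_of_sq_lt_sq (by positivity) (by linarith [sq_sub_sq_eq ha hb])
  have hL : 0 < -(r * (2 * c ^ 2 + 3)) +
      (a * (c + 1) ^ 3 + b * (c * (3 * c + 2)) + (3 * c ^ 2 - 6 * c + 6)) := by
    refine pos_add_of_sq_lt_sq (by nlinarith [sqrt_nonneg (c * (3 * c + 2))]) ?_
    rw [neg_sq, mul_pow, hr]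
    linarith [sq_sub_eq ha hb]
  have hgap : Opt c - BRev c = 2 / 27 * (a * (c + 1) ^ 3 + b * (c * (3 * c + 2)) +
      (3 * c ^ 2 - 6 * c + 6) - r * (2 * c ^ 2 + 3)) := by
    rw [BRev_eq, Opt]
    ring
  linarith

/-- For every `c ≥ 0` and `s ≥ 0`, the full-bundling utility
`u_s(x) = max{0, x₁ + x₂ − s}` has `Rev_c(u_s) ≤ BRev(c)`; consequently, for
`0.077 < c < c̄` no full-bundling mechanism attains the relaxed optimum:
`Rev_c(u_s) ≤ BRev(c) < Opt(c)` for all `s ≥ 0`. -/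
theorem full_bundling_never_attains_relaxed_opt :
    (∀ c : ℝ, 0 ≤ c → ∀ s : ℝ, 0 ≤ s →
      Rev c (fun x : ℝ × ℝ => max 0 (x.1 + x.2 - s)) ≤ BRev c) ∧
    (∀ c : ℝ, 0.077 < c → c < cbar → ∀ s : ℝ, 0 ≤ s →
      Rev c (fun x : ℝ × ℝ => max 0 (x.1 + x.2 - s)) ≤ BRev c ∧ BRev c < Opt c) := by
  refine ⟨fun c hc s hs => rev_fullBundling_le_BRev hc hs, fun c h₁ h₂ s hs => ?_⟩
  exact ⟨rev_fullBundling_le_BRev (by linarith) hs, BRev_lt_Opt h₁ h₂⟩
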